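/- arXiv:1611.02410 — 3 statements merged into one kernel-verified Lean document; each statement's English description precedes it below -/
import Mathlib

section
/- Let S be a nonempty convex subset of a real vector space, φ : S → ℝ convex, and C ⊆ S a convex set symmetric with respect to a point p ∈ C such that φ restricted to C is bounded above. Let μ denote the Minkowski functional of C − p and M := sup_{x ∈ C} (φ(x) − φ(p)). Then for all ε ∈ (0,1) and all u, v ∈ ε(C − p) + p, |φ(u) − φ(v)| ≤ M · (1+ε)/(1−ε) · μ(u − v). -/
/-!
Write `u = p + x`, `v = p + y` with `x, y ∈ ε • D`, `D = C - {p}`, and let `x - y ∈ t • D`.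
Since `D` is convex, `εD + (1 - ε)D = D`, so `z = u + ((1 - ε) / t) • (x - y)` lies in `C`, and `u`
divides the segment `[v, z]` with weight `a = t / (t + 1 - ε) ≤ t / (1 - ε)` on `z`. Convexity gives
`φ u - φ v ≤ a (φ z - φ v)`, where `φ z - φ p ≤ M` by hypothesis and `φ p - φ v ≤ ε M` because
`p` is the midpoint of `v` and its reflection `p - y ∈ p + εD`. Taking the infimum over `t` gives
the gauge, and the reversed inequality follows from the symmetry of `D`.
-/

open Pointwise

variable {X : Type*} [AddCommGroup X] [Module ℝ X]

lemma le_mul_gauge_of_forall_mem_smul {s : Set X} {x : X} {a K : ℝ} (hK : 0 ≤ K)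
    (hx : ∃ t : ℝ, 0 < t ∧ x ∈ t • s) (h : ∀ t : ℝ, 0 < t → x ∈ t • s → a ≤ K * t) :
    a ≤ K * gauge s x := by
  rw [gauge_def, ← smul_eq_mul, ← Real.sInf_smul_of_nonneg hK]
  obtain ⟨t₀, ht₀, hx₀⟩ := hx
  refine le_csInf ⟨K * t₀, t₀, ⟨Set.mem_Ioi.2 ht₀, hx₀⟩, rfl⟩ ?_
  rintro _ ⟨t, ⟨ht, hxt⟩, rfl⟩
  exact h t ht hxt

lemma Convex.sub_mem_add_smul_of_neg_eq {D : Set X} (hD : Convex ℝ D) (hsym : D = -D)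
    {ε δ : ℝ} (hε : 0 ≤ ε) (hδ : 0 ≤ δ) {x y : X} (hx : x ∈ ε • D) (hy : y ∈ δ • D) :
    x - y ∈ (ε + δ) • D := by
  rw [hD.add_smul hε hδ, sub_eq_add_neg]
  refine Set.add_mem_add hx ?_
  rw [hsym, Set.smul_set_neg] at hy
  simpa using hy

lemma Set.mem_sub_singleton_iff_add_mem {G : Type*} [AddCommGroup G] {C : Set G} {p x : G} :
    x ∈ C - {p} ↔ p + x ∈ C := by
  simp [Set.sub_singleton, sub_eq_iff_eq_add']

section

variable {C : Set X} {φ : X → ℝ} {p x y : X} {M ε : ℝ}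

lemma Convex.add_mem_of_mem_smul_sub (hC : Convex ℝ C) (hp : p ∈ C) (hε0 : 0 ≤ ε)
    (hε1 : ε ≤ 1) (hx : x ∈ ε • (C - {p})) : p + x ∈ C := by
  obtain ⟨w, hw, rfl⟩ := hx
  rw [Set.mem_sub_singleton_iff_add_mem] at hw
  simpa using hC.add_smul_sub_mem hp hw ⟨hε0, hε1⟩

lemma ConvexOn.add_sub_le_of_mem_smul_sub (hφ : ConvexOn ℝ C φ) (hp : p ∈ C)
    (hM : ∀ c ∈ C, φ c - φ p ≤ M) (hε0 : 0 ≤ ε) (hε1 : ε ≤ 1) (hx : x ∈ ε • (C - {p})) :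
    φ (p + x) - φ p ≤ ε * M := by
  obtain ⟨w, hw, rfl⟩ := Set.mem_smul_set.1 hx
  rw [Set.mem_sub_singleton_iff_add_mem] at hw
  have hconv := hφ.2 hw hp hε0 (sub_nonneg.2 hε1) (add_sub_cancel ε 1)
  rw [show ε • (p + w) + (1 - ε) • p = p + ε • w by module, smul_eq_mul, smul_eq_mul] at hconv
  linarith [mul_le_mul_of_nonneg_left (hM _ hw) hε0]

lemma ConvexOn.sub_add_le_of_mem_smul_sub (hφ : ConvexOn ℝ C φ) (hp : p ∈ C)
    (hM : ∀ c ∈ C, φ c - φ p ≤ M) (hsym : C - {p} = -(C - {p})) (hε0 : 0 ≤ ε) (hε1 : ε ≤ 1)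
    (hx : x ∈ ε • (C - {p})) :
    φ p - φ (p + x) ≤ ε * M := by
  have hnx : -x ∈ ε • (C - {p}) := by
    rw [hsym, Set.smul_set_neg]
    exact Set.neg_mem_neg.2 hx
  have hmid := hφ.2 (hφ.1.add_mem_of_mem_smul_sub hp hε0 hε1 hx)
    (hφ.1.add_mem_of_mem_smul_sub hp hε0 hε1 hnx) (by norm_num : (0 : ℝ) ≤ 1 / 2)
    (by norm_num : (0 : ℝ) ≤ 1 / 2) (by norm_num)
  rw [show (1 / 2 : ℝ) • (p + x) + (1 / 2 : ℝ) • (p + -x) = p by module, smul_eq_mul,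
    smul_eq_mul] at hmid
  linarith [hφ.add_sub_le_of_mem_smul_sub hp hM hε0 hε1 hnx]

lemma ConvexOn.add_sub_add_le_of_mem_smul_sub (hφ : ConvexOn ℝ C φ) (hp : p ∈ C)
    (hM : ∀ c ∈ C, φ c - φ p ≤ M) (hsym : C - {p} = -(C - {p})) (hε0 : 0 ≤ ε) (hε1 : ε < 1)
    (hx : x ∈ ε • (C - {p})) (hy : y ∈ ε • (C - {p})) {t : ℝ} (ht : 0 < t)
    (hxy : x - y ∈ t • (C - {p})) :
    φ (p + x) - φ (p + y) ≤ M * ((1 + ε) / (1 - ε)) * t := by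
  have hM0 : 0 ≤ M := by simpa using hM p hp
  have h1ε : 0 < 1 - ε := sub_pos.2 hε1
  obtain ⟨w, hw, hwxy⟩ := Set.mem_smul_set.1 hxy
  set z := p + (x + (1 - ε) • w)
  have hz : z ∈ C := by
    have h := Set.add_mem_add hx (Set.smul_mem_smul_set (a := 1 - ε) hw)
    rw [← (hφ.1.sub (convex_singleton p)).add_smul hε0 h1ε.le, add_sub_cancel, one_smul] at h
    exact Set.mem_sub_singleton_iff_add_mem.1 h
  set a := t / (t + (1 - ε))
  have ha0 : 0 ≤ a := by positivity
  have ha1 : 0 ≤ 1 - a := by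
    rw [sub_nonneg, div_le_one (by positivity)]
    linarith
  have hcomb : a • z + (1 - a) • (p + y) = p + x := by
    obtain rfl : y = x - t • w := by rw [hwxy, sub_sub_cancel]
    match_scalars <;> simp only [a] <;> field_simp <;> ring
  have hconv := hφ.2 hz (hφ.1.add_mem_of_mem_smul_sub hp hε0 hε1.le hy) ha0 ha1 (by ring)
  rw [hcomb, smul_eq_mul, smul_eq_mul] at hconv
  have hzy : φ z - φ (p + y) ≤ (1 + ε) * M := by
    linarith [hM z hz, hφ.sub_add_le_of_mem_smul_sub hp hM hsym hε0 hε1.le hy]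
  have ha : a ≤ t / (1 - ε) := div_le_div_of_nonneg_left ht.le h1ε (by linarith)
  calc φ (p + x) - φ (p + y) ≤ a * (φ z - φ (p + y)) := by linarith
    _ ≤ a * ((1 + ε) * M) := mul_le_mul_of_nonneg_left hzy ha0
    _ ≤ t / (1 - ε) * ((1 + ε) * M) := mul_le_mul_of_nonneg_right ha (by positivity)
    _ = M * ((1 + ε) / (1 - ε)) * t := by ring

lemma ConvexOn.add_sub_add_le_mul_gauge (hφ : ConvexOn ℝ C φ) (hp : p ∈ C)
    (hM : ∀ c ∈ C, φ c - φ p ≤ M) (hsym : C - {p} = -(C - {p})) (hε0 : 0 < ε) (hε1 : ε < 1)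
    (hx : x ∈ ε • (C - {p})) (hy : y ∈ ε • (C - {p})) :
    φ (p + x) - φ (p + y) ≤ M * ((1 + ε) / (1 - ε)) * gauge (C - {p}) (x - y) := by
  have hM0 : 0 ≤ M := by simpa using hM p hp
  have h1ε : 0 < 1 - ε := sub_pos.2 hε1
  refine le_mul_gauge_of_forall_mem_smul (by positivity) ⟨ε + ε, by positivity, ?_⟩
    fun t ht hxy ↦ hφ.add_sub_add_le_of_mem_smul_sub hp hM hsym hε0.le hε1 hx hy ht hxy
  exact (hφ.1.sub (convex_singleton p)).sub_mem_add_smul_of_neg_eq hsym hε0.le hε0.le hx hy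

end

theorem stmt_5_general (S : Set X)
    (φ : X → ℝ) (hφ : ConvexOn ℝ S φ)
    (C : Set X) (hCS : C ⊆ S) (hC : Convex ℝ C) (p : X) (hp : p ∈ C)
    (hsym : C - {p} = -(C - {p}))
    (M : ℝ) (hM : ∀ x ∈ C, φ x - φ p ≤ M) :
    ∀ ε : ℝ, 0 < ε → ε < 1 →
      ∀ u ∈ ε • (C - {p}) + {p}, ∀ v ∈ ε • (C - {p}) + {p},
        |φ u - φ v| ≤ M * ((1 + ε) / (1 - ε)) * gauge (C - {p}) (u - v) := by
  intro ε hε0 hε1 u hu v hv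
  have hφC : ConvexOn ℝ C φ := hφ.subset hCS hC
  simp only [Set.add_singleton, Set.mem_image] at hu hv
  obtain ⟨x, hx, rfl⟩ := hu
  obtain ⟨y, hy, rfl⟩ := hv
  have hsymm : ∀ z ∈ C - {p}, -z ∈ C - {p} := fun z hz ↦ by
    rw [hsym]
    exact Set.neg_mem_neg.2 hz
  rw [add_sub_add_right_eq_sub, add_comm x, add_comm y, abs_sub_le_iff]
  refine ⟨hφC.add_sub_add_le_mul_gauge hp hM hsym hε0 hε1 hx hy, ?_⟩
  rw [← gauge_neg hsymm, neg_sub]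
  exact hφC.add_sub_add_le_mul_gauge hp hM hsym hε0 hε1 hy hx

theorem stmt_5 (S : Set X) (hSne : S.Nonempty) (hS : Convex ℝ S)
    (φ : X → ℝ) (hφ : ConvexOn ℝ S φ)
    (C : Set X) (hCS : C ⊆ S) (hC : Convex ℝ C) (p : X) (hp : p ∈ C)
    (hsym : C - {p} = -(C - {p}))
    (M : ℝ) (hM : ∀ x ∈ C, φ x - φ p ≤ M) :
    ∀ ε : ℝ, 0 < ε → ε < 1 →
      ∀ u ∈ ε • (C - {p}) + {p}, ∀ v ∈ ε • (C - {p}) + {p},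
        |φ u - φ v| ≤ M * ((1 + ε) / (1 - ε)) * gauge (C - {p}) (u - v) :=
  stmt_5_general S φ hφ C hCS hC p hp hsym M hM
end

section
/- Let C be a convex set symmetric with respect to x₀ ∈ C, μ the Minkowski functional of C − x₀, and φ : C → ℝ μ-Lipschitz with constant L. Suppose there exist ε > 0 and u ∈ C with ε(C − x₀) + u ⊆ C such that the restriction of φ to ε(C − x₀) + u attains a minimum at u. Then φ°(u, v) ≥ 0 for all v ∈ span(C − x₀), where φ°(u,v) := limsup_{μ(y−u)→0, t→0+} (φ(y+tv) − φ(y))/t. -/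
/-!
Along the ray `u + t • v` with `t > 0` small, the point stays in `ε • (C - x₀) + u`, because a convex
symmetric set containing `0` absorbs every vector of its span; so the difference quotients of `φ` at
the base point `y = u` are eventually nonnegative. The base point `u` itself is admissible in the
limsup defining `gdd`, hence these quotients bound it from below.
-/

open Pointwise Filter

variable {X : Type*} [AddCommGroup X] [Module ℝ X]

/-- Clarke-type generalized directional derivative of `φ` (defined on `C`) at `x` in
direction `v`, where the base point `y ∈ C` converges to `x` with respect to the
Minkowski-type functional `μ` and `t → 0+`. -/
noncomputable def gdd (μ : X → ℝ) (C : Set X) (φ : X → ℝ) (x v : X) : ℝ :=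
  Filter.limsup (fun p : X × ℝ => (φ (p.1 + p.2 • v) - φ p.1) / p.2)
    (((Filter.comap (fun y => μ (y - x)) (nhds 0)) ⊓ Filter.principal C) ×ˢ
      nhdsWithin 0 (Set.Ioi 0))

/-- The open unit ball centred at `x₀` for the Minkowski functional of `C - x₀`,
inside the affine subspace `x₀ + span (C - x₀)`. -/
def ballMu (C : Set X) (x₀ : X) : Set X :=
  {x | x - x₀ ∈ Submodule.span ℝ (C - {x₀}) ∧ gauge (C - {x₀}) (x - x₀) < 1}

open Set Topology

-- No boundedness is needed: if `g` is not eventually bounded above, `limsup g f` is the junk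
-- value `sInf ∅ = 0`.
lemma limsup_nonneg_of_frequently_nonneg {α : Type*} {f : Filter α} {g : α → ℝ}
    (h : ∃ᶠ x in f, 0 ≤ g x) : 0 ≤ limsup g f := by
  rw [limsup_eq]
  refine Real.sInf_nonneg fun a ha => ?_
  obtain ⟨x, hx, hxa⟩ := (h.and_eventually ha).exists
  exact hx.trans hxa

lemma StarConvex.smul_mem_of_le {D : Set X} (hD : StarConvex ℝ 0 D) {x : X} {r t : ℝ}
    (hr : 0 < r) (hrx : r • x ∈ D) (ht : 0 ≤ t) (htr : t ≤ r) : t • x ∈ D := by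
  have h := hD.smul_mem hrx (div_nonneg ht hr.le) ((div_le_one hr).2 htr)
  rwa [smul_smul, div_mul_cancel₀ _ hr.ne'] at h

namespace Convex

variable {D : Set X} (hD : Convex ℝ D) (h0 : (0 : X) ∈ D) (hneg : -D = D)
include hD h0 hneg

lemma exists_pos_smul_mem_of_mem_span {w : X} (hw : w ∈ Submodule.span ℝ D) :
    ∃ r : ℝ, 0 < r ∧ r • w ∈ D := by
  have hstar : StarConvex ℝ 0 D := hD.starConvex h0
  induction hw using Submodule.span_induction with
  | mem x hx => exact ⟨1, one_pos, by rwa [one_smul]⟩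
  | zero => exact ⟨1, one_pos, by rwa [smul_zero]⟩
  | add x y _ _ ihx ihy =>
    obtain ⟨r₁, hr₁, hx⟩ := ihx
    obtain ⟨r₂, hr₂, hy⟩ := ihy
    set r := min r₁ r₂
    have hr : 0 < r := lt_min hr₁ hr₂
    have hrx := hstar.smul_mem_of_le hr₁ hx hr.le (min_le_left _ _)
    have hry := hstar.smul_mem_of_le hr₂ hy hr.le (min_le_right _ _)
    refine ⟨r / 2, half_pos hr, ?_⟩
    convert hD hrx hry (by norm_num : (0 : ℝ) ≤ 1 / 2) (by norm_num : (0 : ℝ) ≤ 1 / 2)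
      (by norm_num) using 1
    simp only [smul_smul, smul_add]
    ring_nf
  | smul a x _ ih =>
    obtain ⟨r, hr, hx⟩ := ih
    rcases eq_or_ne a 0 with rfl | ha
    · exact ⟨1, one_pos, by rwa [zero_smul, smul_zero]⟩
    refine ⟨r / |a|, div_pos hr (abs_pos.2 ha), ?_⟩
    rw [smul_smul]
    rcases abs_choice a with habs | habs
    · rwa [habs, div_mul_cancel₀ _ ha]
    · have hcoef : r / |a| * a = -r := by rw [habs]; field_simp
      rwa [hcoef, neg_smul, ← hneg, Set.neg_mem_neg]

lemma eventually_smul_mem_of_mem_span {w : X} (hw : w ∈ Submodule.span ℝ D) :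
    ∀ᶠ t in 𝓝[>] (0 : ℝ), t • w ∈ D := by
  obtain ⟨r, hr, hrw⟩ := hD.exists_pos_smul_mem_of_mem_span h0 hneg hw
  filter_upwards [Ioc_mem_nhdsGT hr] with t ht
  exact (hD.starConvex h0).smul_mem_of_le hr hrw ht.1.le ht.2

end Convex

lemma gdd_nonneg_of_eventually_le {μ : X → ℝ} (hμ : μ 0 = 0) {C : Set X} {φ : X → ℝ}
    {x v : X} (hx : x ∈ C) (h : ∀ᶠ t in 𝓝[>] (0 : ℝ), φ x ≤ φ (x + t • v)) :
    0 ≤ gdd μ C φ x v := by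
  have hbase : pure x ≤ comap (fun y => μ (y - x)) (𝓝 0) ⊓ 𝓟 C := by
    refine le_inf ?_ (pure_le_principal x |>.2 hx)
    rw [← map_le_iff_le_comap, Filter.map_pure, sub_self, hμ]
    exact pure_le_nhds 0
  refine limsup_nonneg_of_frequently_nonneg (Frequently.filter_mono ?_ (prod_mono hbase le_rfl))
  rw [pure_prod, frequently_map]
  refine Eventually.frequently ?_
  filter_upwards [h, self_mem_nhdsWithin] with t hle hpos
  exact div_nonneg (sub_nonneg.2 hle) (le_of_lt hpos)

theorem stmt_10_general (C : Set X) (hC : Convex ℝ C) (x₀ : X) (hx₀ : x₀ ∈ C)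
    (hsym : C - {x₀} = -(C - {x₀})) (φ : X → ℝ)
    (ε : ℝ) (hε : 0 < ε) (u : X) (hu : u ∈ C)
    (hmin : ∀ w ∈ ε • (C - {x₀}) + {u}, φ u ≤ φ w) :
    ∀ v ∈ Submodule.span ℝ (C - {x₀}), 0 ≤ gdd (gauge (C - {x₀})) C φ u v := by
  intro v hv
  set D := C - {x₀}
  have hD : Convex ℝ (ε • D) := (hC.sub (convex_singleton x₀)).smul ε
  have h0 : (0 : X) ∈ ε • D :=
    zero_mem_smul_set ⟨x₀, hx₀, x₀, rfl, sub_self x₀⟩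
  have hneg : -(ε • D) = ε • D := by rw [← smul_set_neg, ← hsym]
  have hvε : v ∈ Submodule.span ℝ (ε • D) := by
    rwa [Submodule.span_smul_eq_of_isUnit _ _ (isUnit_iff_ne_zero.2 hε.ne')]
  refine gdd_nonneg_of_eventually_le gauge_zero hu ?_
  filter_upwards [hD.eventually_smul_mem_of_mem_span h0 hneg hvε] with t ht
  exact hmin _ (by simpa [add_comm] using add_mem_add ht (mem_singleton u))

theorem stmt_10 (C : Set X) (hC : Convex ℝ C) (x₀ : X) (hx₀ : x₀ ∈ C)
    (hsym : C - {x₀} = -(C - {x₀})) (φ : X → ℝ) (L : ℝ) (hL : 0 < L)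
    (hLip : ∀ u ∈ C, ∀ v ∈ C, |φ u - φ v| ≤ L * gauge (C - {x₀}) (u - v))
    (ε : ℝ) (hε : 0 < ε) (u : X) (hu : u ∈ C)
    (hsub : ε • (C - {x₀}) + {u} ⊆ C)
    (hmin : ∀ w ∈ ε • (C - {x₀}) + {u}, φ u ≤ φ w) :
    ∀ v ∈ Submodule.span ℝ (C - {x₀}), 0 ≤ gdd (gauge (C - {x₀})) C φ u v :=
  stmt_10_general C hC x₀ hx₀ hsym φ ε hε u hu hmin
end

section
/- Let φ(x) := ∫₀¹ (x(t) − t)²/t dt for x ∈ L∞[0,1] with x ≥ −1 a.e. and ∫₀¹ (x(t)−t)²/t dt < ∞, and let S be the set of such x. Then the identity function f(t) = t belongs to the relative algebraic interior icr S: for every v ∈ span S there exists ε > 0 with f + εv ∈ S. -/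
/-!
Let `W` be the subspace of `L∞` of the `g` with `∫₀¹ g(t)²/t dt < ∞`; it is a subspace because
`(a + b)² ≤ 2a² + 2b²`. Since `∫₀¹ t²/t dt = 1`, each `x ∈ S` lies in `W`, hence so does
`span S`. For `v ∈ W` and `ε ‖v‖_∞ ≤ 1`, the function `f + εv = t + εv(t)` stays `≥ -1` on `(0, 1]`
and `(f + εv)(t) - t = εv(t)`, so `f + εv ∈ S`; taking `v = 0` also gives `f ∈ S`.
-/

open Pointwise MeasureTheory

/-- Lebesgue measure on the interval `(0, 1]`. -/
noncomputable def μ0 : Measure ℝ := volume.restrict (Set.Ioc 0 1)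

/-- The set `S` of essentially bounded functions `x` with `x ≥ −1` a.e. and
`∫₀¹ (x(t) − t)²/t dt < ∞`, viewed inside `L∞[0,1]`. -/
def Sinf : Set (Lp ℝ ⊤ μ0) :=
  {x | (∀ᵐ t ∂μ0, (-1 : ℝ) ≤ x t) ∧
    (∫⁻ t, ENNReal.ofReal ((x t - t) ^ 2 / t) ∂μ0) < ⊤}

open ENNReal

theorem MeasureTheory.Lp.ae_norm_le_norm_top {α E : Type*} [MeasurableSpace α] {μ : Measure α}
    [NormedAddCommGroup E] (f : Lp E ∞ μ) : ∀ᵐ x ∂μ, ‖f x‖ ≤ ‖f‖ := by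
  filter_upwards [ae_le_eLpNormEssSup (f := (f : α → E)) (μ := μ)] with x hx
  rw [Lp.norm_def, eLpNorm_exponent_top, ← toReal_enorm]
  exact ENNReal.toReal_mono (eLpNorm_exponent_top (f := (f : α → E)) ▸ Lp.eLpNorm_ne_top f) hx

theorem ofReal_sq_add_div_le (a b t : ℝ) :
    ENNReal.ofReal ((a + b) ^ 2 / t) ≤
      2 * ENNReal.ofReal (a ^ 2 / t) + 2 * ENNReal.ofReal (b ^ 2 / t) := by
  rcases le_or_gt t 0 with ht | ht
  · rw [ENNReal.ofReal_of_nonpos (div_nonpos_of_nonneg_of_nonpos (sq_nonneg _) ht)]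
    exact zero_le
  have hsq : (a + b) ^ 2 / t ≤ 2 * (a ^ 2 / t) + 2 * (b ^ 2 / t) := by
    rw [← mul_div_assoc, ← mul_div_assoc, ← add_div]
    gcongr
    nlinarith [sq_nonneg (a - b)]
  calc ENNReal.ofReal ((a + b) ^ 2 / t)
      ≤ ENNReal.ofReal (2 * (a ^ 2 / t)) + ENNReal.ofReal (2 * (b ^ 2 / t)) :=
        (ENNReal.ofReal_le_ofReal hsq).trans ENNReal.ofReal_add_le
    _ = 2 * ENNReal.ofReal (a ^ 2 / t) + 2 * ENNReal.ofReal (b ^ 2 / t) := by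
        simp [ENNReal.ofReal_mul]

noncomputable def weightedSqIntegral (μ : Measure ℝ) (g : ℝ → ℝ) : ℝ≥0∞ :=
  ∫⁻ t, ENNReal.ofReal (g t ^ 2 / t) ∂μ

section weightedSqIntegral

variable {μ : Measure ℝ}

theorem weightedSqIntegral_congr_ae {g h : ℝ → ℝ} (hgh : g =ᵐ[μ] h) :
    weightedSqIntegral μ g = weightedSqIntegral μ h :=
  lintegral_congr_ae (hgh.mono fun t ht => by simp only [ht])

theorem weightedSqIntegral_add_le {g : ℝ → ℝ} (hg : AEMeasurable g μ) (h : ℝ → ℝ) :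
    weightedSqIntegral μ (g + h) ≤ 2 * weightedSqIntegral μ g + 2 * weightedSqIntegral μ h := by
  have hg' : AEMeasurable (fun t => 2 * ENNReal.ofReal (g t ^ 2 / t)) μ :=
    (ENNReal.measurable_ofReal.comp_aemeasurable ((hg.pow_const 2).div aemeasurable_id)).const_mul 2
  calc weightedSqIntegral μ (g + h)
      ≤ ∫⁻ t, 2 * ENNReal.ofReal (g t ^ 2 / t) + 2 * ENNReal.ofReal (h t ^ 2 / t) ∂μ :=
        lintegral_mono fun t => ofReal_sq_add_div_le (g t) (h t) t
    _ = 2 * weightedSqIntegral μ g + 2 * weightedSqIntegral μ h := by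
        rw [lintegral_add_left' hg', lintegral_const_mul' _ _ ofNat_ne_top,
          lintegral_const_mul' _ _ ofNat_ne_top]
        rfl

theorem weightedSqIntegral_const_mul (c : ℝ) (g : ℝ → ℝ) :
    weightedSqIntegral μ (fun t => c * g t) = ENNReal.ofReal (c ^ 2) * weightedSqIntegral μ g := by
  simp only [weightedSqIntegral]
  rw [← lintegral_const_mul' _ _ ofReal_ne_top]
  congr 1 with t
  rw [← ENNReal.ofReal_mul (sq_nonneg c), mul_pow, mul_div_assoc]

theorem weightedSqIntegral_add_lt_top {g h : ℝ → ℝ} (hg : AEMeasurable g μ)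
    (hg_lt : weightedSqIntegral μ g < ⊤) (hh_lt : weightedSqIntegral μ h < ⊤) :
    weightedSqIntegral μ (g + h) < ⊤ :=
  (weightedSqIntegral_add_le hg h).trans_lt <| by finiteness

theorem weightedSqIntegral_const_mul_lt_top (c : ℝ) {g : ℝ → ℝ}
    (hg : weightedSqIntegral μ g < ⊤) : weightedSqIntegral μ (fun t => c * g t) < ⊤ := by
  rw [weightedSqIntegral_const_mul]
  exact ENNReal.mul_lt_top ofReal_lt_top hg

variable (μ) in
noncomputable def weightedSqIntegrableSubmodule (p : ℝ≥0∞) : Submodule ℝ (Lp ℝ p μ) where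
  carrier := {g | weightedSqIntegral μ g < ⊤}
  zero_mem' := by
    change weightedSqIntegral μ _ < ⊤
    rw [weightedSqIntegral_congr_ae (Lp.coeFn_zero ℝ p μ)]
    simp [weightedSqIntegral]
  add_mem' {g h} hg hh := by
    change weightedSqIntegral μ _ < ⊤
    rw [weightedSqIntegral_congr_ae (Lp.coeFn_add g h)]
    exact weightedSqIntegral_add_lt_top (Lp.aestronglyMeasurable g).aemeasurable hg hh
  smul_mem' c g hg := by
    change weightedSqIntegral μ _ < ⊤
    rw [weightedSqIntegral_congr_ae (Lp.coeFn_smul c g)]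
    exact weightedSqIntegral_const_mul_lt_top c hg

end weightedSqIntegral

theorem ae_mem_Ioc_μ0 : ∀ᵐ t ∂μ0, t ∈ Set.Ioc (0 : ℝ) 1 :=
  ae_restrict_mem measurableSet_Ioc

theorem weightedSqIntegral_id_lt_top : weightedSqIntegral μ0 id < ⊤ := by
  have hle : weightedSqIntegral μ0 id ≤ ∫⁻ _, 1 ∂μ0 := by
    refine lintegral_mono_ae (ae_mem_Ioc_μ0.mono fun t ht => ?_)
    rw [id, sq, mul_div_assoc, div_self ht.1.ne', mul_one, ENNReal.ofReal_le_one]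
    exact ht.2
  refine hle.trans_lt ?_
  simp [μ0, Real.volume_Ioc]

theorem Sinf_subset_weightedSqIntegrableSubmodule :
    Sinf ⊆ weightedSqIntegrableSubmodule μ0 ⊤ := by
  intro x hx
  have hx_split : (x : ℝ → ℝ) = (fun t => x t - t) + id := by
    ext t
    simp
  change weightedSqIntegral μ0 x < ⊤
  rw [hx_split]
  exact weightedSqIntegral_add_lt_top
    ((Lp.aestronglyMeasurable x).aemeasurable.sub aemeasurable_id) hx.2 weightedSqIntegral_id_lt_top

theorem add_smul_mem_Sinf {f : Lp ℝ ⊤ μ0} (hf : ∀ᵐ t ∂μ0, f t = t) {v : Lp ℝ ⊤ μ0}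
    (hv : v ∈ weightedSqIntegrableSubmodule μ0 ⊤) {ε : ℝ} (hε : 0 ≤ ε) (hεv : ε * ‖v‖ ≤ 1) :
    f + ε • v ∈ Sinf := by
  have hcoe : ∀ᵐ t ∂μ0, (f + ε • v) t = t + ε * v t := by
    filter_upwards [hf, Lp.coeFn_add f (ε • v), Lp.coeFn_smul ε v] with t hft hadd hsmul
    rw [hadd, Pi.add_apply, hsmul, hft]
    rfl
  refine ⟨?_, ?_⟩
  · filter_upwards [hcoe, ae_mem_Ioc_μ0, Lp.ae_norm_le_norm_top v] with t ht hmem hvt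
    have hsmall : |ε * v t| ≤ 1 := by
      rw [abs_mul, abs_of_nonneg hε]
      exact (mul_le_mul_of_nonneg_left hvt hε).trans hεv
    linarith [neg_abs_le (ε * v t), hmem.1]
  · have hdiff : (fun t => (f + ε • v) t - t) =ᵐ[μ0] fun t => ε * v t :=
      hcoe.mono fun t ht => by simp only [ht, add_sub_cancel_left]
    change weightedSqIntegral μ0 _ < ⊤
    rw [weightedSqIntegral_congr_ae hdiff]
    exact weightedSqIntegral_const_mul_lt_top ε hv

theorem stmt_17 (f : Lp ℝ ⊤ μ0) (hf : ∀ᵐ t ∂μ0, f t = t) :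
    f ∈ Sinf ∧ ∀ v ∈ Submodule.span ℝ Sinf, ∃ ε : ℝ, 0 < ε ∧ f + ε • v ∈ Sinf := by
  refine ⟨by simpa using add_smul_mem_Sinf hf (zero_mem _) le_rfl (by simp), fun v hv => ?_⟩
  have hv' := Submodule.span_le.mpr Sinf_subset_weightedSqIntegrableSubmodule hv
  refine ⟨(‖v‖ + 1)⁻¹, by positivity, add_smul_mem_Sinf hf hv' (by positivity) ?_⟩
  rw [inv_mul_le_iff₀ (by positivity)]
  linarith
end
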